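/- Let O₁ and O₂ be nonempty sets and O = O₁ × O₂, with preorders ≽₁ on Δ(O₁), ≽₂ on Δ(O₂), and a preorder ≽ on Δ(O). Suppose that for each i ∈ {1,2} there are aᵢ, bᵢ, cᵢ ∈ Oᵢ with δ_{aᵢ} ≻ᵢ δ_{bᵢ} ≻ᵢ δ_{cᵢ}. Then ≽ cannot simultaneously satisfy Pareto, Converse Pareto, Independence, Qualitative Unidimensional Continuity, Qualitative Unidimensional Certainty Equivalents, and Negative Dominance. -/
import Mathlib


open scoped BigOperators

noncomputable section

/-- A finite-support lottery on `X`. -/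
structure Lottery (X : Type*) where
  val : X →₀ ℝ
  nonneg : ∀ x, 0 ≤ val x
  total : val.sum (fun _ p => p) = 1

namespace Lottery

variable {X : Type*}

/-- The point-mass lottery at `x`. -/
def delta (x : X) : Lottery X where
  val := Finsupp.single x 1
  nonneg := fun y => by
    classical
    rw [Finsupp.single_apply]
    split <;> norm_num
  total := by
    rw [Finsupp.sum_single_index rfl]

/-- The mixture `α • f + (1 - α) • g`. -/
def mix (α : ℝ) (h1 : 0 ≤ α) (h2 : α ≤ 1) (f g : Lottery X) : Lottery X where
  val := α • f.val + (1 - α) • g.val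
  nonneg := fun x => by
    have hf := f.nonneg x
    have hg := g.nonneg x
    simp only [Finsupp.coe_add, Finsupp.coe_smul, Pi.add_apply, Pi.smul_apply, smul_eq_mul]
    nlinarith
  total := by
    rw [Finsupp.sum_add_index' (fun _ => rfl) (fun _ _ _ => rfl)]
    rw [Finsupp.sum_smul_index (fun _ => rfl), Finsupp.sum_smul_index (fun _ => rfl)]
    rw [← Finsupp.mul_sum, ← Finsupp.mul_sum, f.total, g.total]
    ring

/-- The uniform lottery on `a` and `b`, written `a/b` in the paper. -/
def unif (a b : X) : Lottery X := mix (1/2) (by norm_num) (by norm_num) (delta a) (delta b)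

/-- Strict preference. -/
def SPref (R : Lottery X → Lottery X → Prop) (f g : Lottery X) : Prop := R f g ∧ ¬ R g f

/-- Indifference. -/
def Indiff (R : Lottery X → Lottery X → Prop) (f g : Lottery X) : Prop := R f g ∧ R g f

/-- Incomparability. -/
def Incomp (R : Lottery X → Lottery X → Prop) (f g : Lottery X) : Prop := ¬ R f g ∧ ¬ R g f

/-- Negative Dominance. -/
def NegDominance (R : Lottery X → Lottery X → Prop) : Prop :=
  ∀ f g : Lottery X, SPref R f g →
    ∃ o ∈ f.val.support, ∃ o' ∈ g.val.support, SPref R (delta o) (delta o')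

/-- Independence. -/
def Independence (R : Lottery X → Lottery X → Prop) : Prop :=
  ∀ f g h : Lottery X, ∀ α : ℝ, ∀ (h1 : 0 < α) (h2 : α < 1),
    (R f g ↔ R (mix α h1.le h2.le f h) (mix α h1.le h2.le g h))

/-- The coordinatewise expectation of a lottery on `ℝ²`. -/
def expLot (f : Lottery (ℝ × ℝ)) : ℝ × ℝ :=
  (f.val.sum fun o p => p * o.1, f.val.sum fun o p => p * o.2)

/-- Pareto. -/
def Pareto (R : Lottery (ℝ × ℝ) → Lottery (ℝ × ℝ) → Prop) : Prop :=
  ∀ x y x' y' : ℝ, x' ≤ x → y' ≤ y → R (delta (x, y)) (delta (x', y'))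

/-- Converse Pareto. -/
def ConvPareto (R : Lottery (ℝ × ℝ) → Lottery (ℝ × ℝ) → Prop) : Prop :=
  ∀ x y x' y' : ℝ, R (delta (x, y)) (delta (x', y')) → x' ≤ x ∧ y' ≤ y

/-- Two outcomes are unidimensional with each other if they differ in at most one coordinate. -/
def UniWith {A B : Type*} (o o' : A × B) : Prop := o.1 = o'.1 ∨ o.2 = o'.2

/-- A lottery is unidimensional if any two outcomes in its support are unidimensional
with each other. -/
def Unidim {A B : Type*} (f : Lottery (A × B)) : Prop :=
  ∀ o ∈ f.val.support, ∀ o' ∈ f.val.support, UniWith o o'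

/-- Expectationalism. -/
def Expectationalism (R : Lottery (ℝ × ℝ) → Lottery (ℝ × ℝ) → Prop) : Prop :=
  ∀ f, Indiff R f (delta (expLot f))

/-- Unidimensional Expectations. -/
def UnidimExp (R : Lottery (ℝ × ℝ) → Lottery (ℝ × ℝ) → Prop) : Prop :=
  ∀ f, Unidim f → Indiff R f (delta (expLot f))

end Lottery

open Lottery

/-- Qualitative Pareto. -/
def QPareto {O₁ O₂ : Type*} (R1 : Lottery O₁ → Lottery O₁ → Prop)
    (R2 : Lottery O₂ → Lottery O₂ → Prop)
    (R : Lottery (O₁ × O₂) → Lottery (O₁ × O₂) → Prop) : Prop :=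
  ∀ o₁ o₁' : O₁, ∀ o₂ o₂' : O₂,
    R1 (delta o₁) (delta o₁') → R2 (delta o₂) (delta o₂') →
      R (delta (o₁, o₂)) (delta (o₁', o₂'))

/-- Qualitative Converse Pareto. -/
def QConvPareto {O₁ O₂ : Type*} (R1 : Lottery O₁ → Lottery O₁ → Prop)
    (R2 : Lottery O₂ → Lottery O₂ → Prop)
    (R : Lottery (O₁ × O₂) → Lottery (O₁ × O₂) → Prop) : Prop :=
  ∀ o₁ o₁' : O₁, ∀ o₂ o₂' : O₂,
    R (delta (o₁, o₂)) (delta (o₁', o₂')) →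
      R1 (delta o₁) (delta o₁') ∧ R2 (delta o₂) (delta o₂')

/-- Qualitative Unidimensional Continuity. -/
def QUnidimCont {O₁ O₂ : Type*}
    (R : Lottery (O₁ × O₂) → Lottery (O₁ × O₂) → Prop) : Prop :=
  ∀ a b c : O₁ × O₂,
    SPref R (delta a) (delta b) → SPref R (delta b) (delta c) →
    UniWith a b → UniWith a c → UniWith b c →
    ∃ f : Lottery (O₁ × O₂), (f.val.support : Set (O₁ × O₂)) ⊆ {a, c} ∧ Indiff R f (delta b)

/-- Qualitative Unidimensional Certainty Equivalents. -/
def QUnidimCE {O₁ O₂ : Type*}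
    (R : Lottery (O₁ × O₂) → Lottery (O₁ × O₂) → Prop) : Prop :=
  ∀ f : Lottery (O₁ × O₂), Unidim f →
    ∃ ostar : O₁ × O₂, (∀ o ∈ f.val.support, UniWith ostar o) ∧ Indiff R f (delta ostar) ∧
      ((∃ o ∈ f.val.support, ∃ o' ∈ f.val.support, SPref R (delta o) (delta o')) →
        ∃ o'' ∈ f.val.support, ∃ o''' ∈ f.val.support,
          SPref R (delta o'') (delta ostar) ∧ SPref R (delta ostar) (delta o'''))


namespace Lottery

variable {X : Type*}

theorem ext' {f g : Lottery X} (h : f.val = g.val) : f = g := by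
  cases f; cases g; simpa using h

@[simp] lemma delta_val (x : X) : (delta x).val = Finsupp.single x 1 := rfl

@[simp] lemma mix_val (α : ℝ) (h1 : 0 ≤ α) (h2 : α ≤ 1) (f g : Lottery X) :
    (mix α h1 h2 f g).val = α • f.val + (1 - α) • g.val := rfl

lemma mem_delta_support {x o : X} (ho : o ∈ (delta x).val.support) : o = x := by
  classical
  by_contra hc
  exact (Finsupp.mem_support_iff.mp ho)
    (by simp [delta, Finsupp.single_apply, Ne.symm hc])

lemma mem_mix_delta {α : ℝ} {h1 : 0 ≤ α} {h2 : α ≤ 1} {x y o : X}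
    (ho : o ∈ (mix α h1 h2 (delta x) (delta y)).val.support) : o = x ∨ o = y := by
  classical
  by_contra hc
  push_neg at hc
  exact (Finsupp.mem_support_iff.mp ho)
    (by simp [mix, delta, Finsupp.single_apply, Ne.symm hc.1, Ne.symm hc.2])

lemma left_mem_mix_delta {α : ℝ} (h1 : 0 < α) (h2 : α ≤ 1) {x y : X} (hxy : x ≠ y) :
    x ∈ (mix α h1.le h2 (delta x) (delta y)).val.support := by
  classical
  refine Finsupp.mem_support_iff.mpr ?_
  have hv : (mix α h1.le h2 (delta x) (delta y)).val x = α := by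
    simp [mix, delta, Finsupp.single_apply, Ne.symm hxy]
  rw [hv]; exact h1.ne'

lemma right_mem_mix_delta {α : ℝ} (h1 : 0 ≤ α) (h2 : α < 1) {x y : X} (hxy : x ≠ y) :
    y ∈ (mix α h1 h2.le (delta x) (delta y)).val.support := by
  classical
  refine Finsupp.mem_support_iff.mpr ?_
  have hv : (mix α h1 h2.le (delta x) (delta y)).val y = 1 - α := by
    simp [mix, delta, Finsupp.single_apply, hxy]
  rw [hv]
  have hpos : (0:ℝ) < 1 - α := by linarith
  exact hpos.ne'

lemma ind_spref {R : Lottery X → Lottery X → Prop} (hInd : Independence R)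
    {f g h : Lottery X} {α : ℝ} (h1 : 0 < α) (h2 : α < 1) (hs : SPref R f g) :
    SPref R (mix α h1.le h2.le f h) (mix α h1.le h2.le g h) :=
  ⟨(hInd f g h α h1 h2).mp hs.1, fun hrr => hs.2 ((hInd g f h α h1 h2).mpr hrr)⟩

lemma ind_indiff {R : Lottery X → Lottery X → Prop} (hInd : Independence R)
    {f g h : Lottery X} {α : ℝ} (h1 : 0 < α) (h2 : α < 1) (hs : Indiff R f g) :
    Indiff R (mix α h1.le h2.le f h) (mix α h1.le h2.le g h) :=
  ⟨(hInd f g h α h1 h2).mp hs.1, (hInd g f h α h1 h2).mp hs.2⟩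

lemma mix_eq1 (p q r : X)
    (e1 : (0:ℝ) ≤ 1/4) (e2 : (1:ℝ)/4 ≤ 1) (e3 : (0:ℝ) ≤ 1/3) (e4 : (1:ℝ)/3 ≤ 1)
    (e5 : (0:ℝ) ≤ 1/2) (e6 : (1:ℝ)/2 ≤ 1) :
    mix (1/4) e1 e2 (delta p) (mix (1/3) e3 e4 (delta q) (delta r)) =
      mix (1/2) e5 e6 (mix (1/2) e5 e6 (delta p) (delta q)) (delta r) := by
  apply ext'
  simp only [mix_val, delta_val]
  ext z
  simp only [Finsupp.coe_add, Finsupp.coe_smul, Pi.add_apply, Pi.smul_apply, smul_eq_mul]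
  ring

lemma mix_eq2 (p q r : X)
    (e1 : (0:ℝ) ≤ 1/4) (e2 : (1:ℝ)/4 ≤ 1) (e3 : (0:ℝ) ≤ 1/3) (e4 : (1:ℝ)/3 ≤ 1)
    (e5 : (0:ℝ) ≤ 3/4) (e6 : (3:ℝ)/4 ≤ 1) :
    mix (1/4) e1 e2 (delta p) (mix (1/3) e3 e4 (delta q) (delta r)) =
      mix (3/4) e5 e6 (mix (1/3) e3 e4 (delta p) (delta r)) (delta q) := by
  apply ext'
  simp only [mix_val, delta_val]
  ext z
  simp only [Finsupp.coe_add, Finsupp.coe_smul, Pi.add_apply, Pi.smul_apply, smul_eq_mul]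
  ring

end Lottery

section Helpers18

variable {O₁ O₂ : Type*} {R : Lottery (O₁ × O₂) → Lottery (O₁ × O₂) → Prop}

lemma ce_two_point (ht : Transitive R) (hCE : QUnidimCE R)
    {p q : O₁ × O₂} (hpq : UniWith p q) (hne : p ≠ q)
    {α : ℝ} (h1 : 0 < α) (h2 : α < 1)
    (hst : SPref R (delta p) (delta q)) :
    ∃ os : O₁ × O₂, UniWith os p ∧ UniWith os q ∧
      Indiff R (mix α h1.le h2.le (delta p) (delta q)) (delta os) ∧
      SPref R (delta p) (delta os) ∧ SPref R (delta os) (delta q) := by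
  have hUni : Unidim (mix α h1.le h2.le (delta p) (delta q)) := by
    intro o ho o' ho'
    rcases mem_mix_delta ho with rfl | rfl <;> rcases mem_mix_delta ho' with rfl | rfl
    · exact Or.inl rfl
    · exact hpq
    · rcases hpq with h | h
      · exact Or.inl h.symm
      · exact Or.inr h.symm
    · exact Or.inl rfl
  obtain ⟨os, huni, hind, hbet⟩ := hCE _ hUni
  have hmp : p ∈ (mix α h1.le h2.le (delta p) (delta q)).val.support :=
    left_mem_mix_delta h1 h2.le hne
  have hmq : q ∈ (mix α h1.le h2.le (delta p) (delta q)).val.support :=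
    right_mem_mix_delta h1.le h2 hne
  obtain ⟨o2, ho2, o3, ho3, h3, h4⟩ := hbet ⟨p, hmp, q, hmq, hst⟩
  have h3' : SPref R (delta p) (delta os) := by
    rcases mem_mix_delta ho2 with rfl | rfl
    · exact h3
    · exfalso
      rcases mem_mix_delta ho3 with rfl | rfl
      · exact hst.2 (ht h3.1 h4.1)
      · exact h3.2 h4.1
  have h4' : SPref R (delta os) (delta q) := by
    rcases mem_mix_delta ho3 with rfl | rfl
    · exact absurd h3'.1 h4.2
    · exact h4
  exact ⟨os, huni p hmp, huni q hmq, hind, h3', h4'⟩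

end Helpers18

/-- qualitative inconsistency of Pareto, Converse Pareto, Independence,
Qualitative Unidimensional Continuity, Qualitative Unidimensional Certainty
Equivalents, and Negative Dominance, given three strictly ordered elements in each
dimension. -/
theorem statement18 {O₁ O₂ : Type*} [Nonempty O₁] [Nonempty O₂]
    (R1 : Lottery O₁ → Lottery O₁ → Prop) (R2 : Lottery O₂ → Lottery O₂ → Prop)
    (R : Lottery (O₁ × O₂) → Lottery (O₁ × O₂) → Prop)
    (h1r : Reflexive R1) (h1t : Transitive R1)
    (h2r : Reflexive R2) (h2t : Transitive R2)
    (hr : Reflexive R) (ht : Transitive R)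
    (hex1 : ∃ a b c : O₁, SPref R1 (delta a) (delta b) ∧ SPref R1 (delta b) (delta c))
    (hex2 : ∃ a b c : O₂, SPref R2 (delta a) (delta b) ∧ SPref R2 (delta b) (delta c)) :
    ¬ (QPareto R1 R2 R ∧ QConvPareto R1 R2 R ∧ Independence R ∧
        QUnidimCont R ∧ QUnidimCE R ∧ NegDominance R) := by
  rintro ⟨hP, hCP, hInd, _hCont, hCE, hND⟩
  obtain ⟨a₁, b₁, c₁, hab1, hbc1⟩ := hex1
  obtain ⟨a₂, b₂, c₂, hab2, hbc2⟩ := hex2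
  have hac1 : SPref R1 (delta a₁) (delta c₁) :=
    ⟨h1t hab1.1 hbc1.1, fun h => hab1.2 (h1t hbc1.1 h)⟩
  have hac2 : SPref R2 (delta a₂) (delta c₂) :=
    ⟨h2t hab2.1 hbc2.1, fun h => hab2.2 (h2t hbc2.1 h)⟩
  have hne1 : a₁ ≠ c₁ := by rintro rfl; exact hac1.2 (h1r _)
  have hne2 : a₂ ≠ c₂ := by rintro rfl; exact hac2.2 (h2r _)
  have mkS : ∀ (x x' : O₁) (y y' : O₂), R1 (delta x) (delta x') → R2 (delta y) (delta y') →
      (¬ R1 (delta x') (delta x) ∨ ¬ R2 (delta y') (delta y)) →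
      SPref R (delta (x, y)) (delta (x', y')) := by
    intro x x' y y' hx hy hn
    refine ⟨hP _ _ _ _ hx hy, fun hrr => ?_⟩
    obtain ⟨ha, hb⟩ := hCP _ _ _ _ hrr
    rcases hn with h | h
    · exact h ha
    · exact h hb
  have q12 : (0:ℝ) < 1/2 := by norm_num
  have q12' : (1:ℝ)/2 < 1 := by norm_num
  have q13 : (0:ℝ) < 1/3 := by norm_num
  have q13' : (1:ℝ)/3 < 1 := by norm_num
  have q14 : (0:ℝ) < 1/4 := by norm_num
  have q14' : (1:ℝ)/4 < 1 := by norm_num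
  have q34 : (0:ℝ) < 3/4 := by norm_num
  have q34' : (3:ℝ)/4 < 1 := by norm_num
  -- Step 1: certainty equivalent of ½(a₁,a₂)+½(a₁,c₂) is (a₁,k)
  obtain ⟨os, u1, u2, hVk, hktop, _hkbot⟩ :=
    ce_two_point ht hCE (p := (a₁, a₂)) (q := (a₁, c₂)) (Or.inl rfl)
      (by simp [hne2]) q12 q12' (mkS _ _ _ _ (h1r _) hac2.1 (Or.inr hac2.2))
  obtain ⟨u, k⟩ := os
  simp only [UniWith] at u1 u2
  have hu : u = a₁ := by
    rcases u1 with h | h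
    · exact h
    · rcases u2 with h' | h'
      · exact h'
      · exact absurd (h.symm.trans h') hne2
  replace hu := hu.symm
  subst hu
  have hR2ak : R2 (delta a₂) (delta k) := (hCP _ _ _ _ hktop.1).2
  have hnR2ka : ¬ R2 (delta k) (delta a₂) := fun h => hktop.2 (hP _ _ _ _ (h1r _) h)
  have hneak : a₂ ≠ k := by rintro rfl; exact hnR2ka (h2r _)
  -- Step 2: certainty equivalent of ½(a₁,k)+½(c₁,k) is (m,k)
  obtain ⟨os, v1, v2, hRm, hmtop, _hmbot⟩ :=
    ce_two_point ht hCE (p := (a₁, k)) (q := (c₁, k)) (Or.inr rfl)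
      (by simp [hne1]) q12 q12' (mkS _ _ _ _ hac1.1 (h2r _) (Or.inl hac1.2))
  obtain ⟨m, w⟩ := os
  simp only [UniWith] at v1 v2
  have hw : w = k := by
    rcases v1 with h | h
    · rcases v2 with h' | h'
      · exact absurd (h.symm.trans h') hne1
      · exact h'
    · exact h
  replace hw := hw.symm
  subst hw
  have hnR1ma : ¬ R1 (delta m) (delta a₁) := fun h => hmtop.2 (hP _ _ _ _ h (h2r _))
  -- Step 3: certainty equivalent of ⅓(c₁,a₂)+⅔(c₁,k) is (c₁,l)
  obtain ⟨os, w1, w2, hWl, _hltop, hlbot⟩ :=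
    ce_two_point ht hCE (p := (c₁, a₂)) (q := (c₁, k)) (Or.inl rfl)
      (by simp [hneak]) q13 q13' (mkS _ _ _ _ (h1r _) hR2ak (Or.inr hnR2ka))
  obtain ⟨u', l⟩ := os
  simp only [UniWith] at w1 w2
  have hu' : u' = c₁ := by
    rcases w1 with h | h
    · exact h
    · rcases w2 with h' | h'
      · exact h'
      · exact absurd (h.symm.trans h') hneak
  replace hu' := hu'.symm
  subst hu'
  have hnR2kl : ¬ R2 (delta k) (delta l) := fun h => hlbot.2 (hP _ _ _ _ (h1r _) h)
  -- Independence: G₀ := ½ V + ½ δ(c₁,k) ∼ ½ δ(a₁,k) + ½ δ(c₁,k) ∼ δ(m,k)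
  have hG0R0 :
      Indiff R
        (mix (1/2) q12.le q12'.le
          (mix (1/2) q12.le q12'.le (delta (a₁, a₂)) (delta (a₁, c₂))) (delta (c₁, k)))
        (mix (1/2) q12.le q12'.le (delta (a₁, k)) (delta (c₁, k))) :=
    ind_indiff hInd q12 q12' hVk
  have hG0P :
      Indiff R
        (mix (1/2) q12.le q12'.le
          (mix (1/2) q12.le q12'.le (delta (a₁, a₂)) (delta (a₁, c₂))) (delta (c₁, k)))
        (delta (m, k)) :=
    ⟨ht hG0R0.1 hRm.1, ht hRm.2 hG0R0.2⟩
  -- Souring step: G₀ ≻ G₁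
  have h4' :
      SPref R
        (mix (1/4) q14.le q14'.le (delta (a₁, a₂))
          (mix (1/3) q13.le q13'.le (delta (a₁, c₂)) (delta (c₁, k))))
        (mix (1/4) q14.le q14'.le (delta (c₁, a₂))
          (mix (1/3) q13.le q13'.le (delta (a₁, c₂)) (delta (c₁, k)))) :=
    ind_spref hInd q14 q14' (mkS _ _ _ _ hac1.1 (h2r _) (Or.inl hac1.2))
  rw [mix_eq1 (a₁, a₂) (a₁, c₂) (c₁, k) q14.le q14'.le q13.le q13'.le q12.le q12'.le] at h4'
  -- Collapse: G₁ ∼ G₂ := ¾ δ(c₁,l) + ¼ δ(a₁,c₂)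
  have h5' :
      Indiff R
        (mix (3/4) q34.le q34'.le
          (mix (1/3) q13.le q13'.le (delta (c₁, a₂)) (delta (c₁, k)))
          (delta (a₁, c₂)))
        (mix (3/4) q34.le q34'.le (delta (c₁, l)) (delta (a₁, c₂))) :=
    ind_indiff hInd q34 q34' hWl
  rw [← mix_eq2 (c₁, a₂) (a₁, c₂) (c₁, k) q14.le q14'.le q13.le q13'.le q34.le q34'.le] at h5'
  -- Chain: δ(m,k) ≻ G₂
  have s1 :
      SPref R (delta (m, k))
        (mix (1/4) q14.le q14'.le (delta (c₁, a₂))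
          (mix (1/3) q13.le q13'.le (delta (a₁, c₂)) (delta (c₁, k)))) :=
    ⟨ht hG0P.2 h4'.1, fun hrr => h4'.2 (ht hrr hG0P.2)⟩
  have s2 :
      SPref R (delta (m, k))
        (mix (3/4) q34.le q34'.le (delta (c₁, l)) (delta (a₁, c₂))) :=
    ⟨ht s1.1 h5'.1, fun hrr => s1.2 (ht h5'.1 hrr)⟩
  -- Negative Dominance gives a contradiction
  obtain ⟨o, ho, o', ho', hso⟩ := hND _ _ s2
  have hoeq : o = (m, k) := mem_delta_support ho
  subst hoeq
  rcases mem_mix_delta ho' with rfl | rfl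
  · exact hnR2kl (hCP _ _ _ _ hso.1).2
  · exact hnR1ma (hCP _ _ _ _ hso.1).1
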